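/- Soundness of the summary-graph ancestor criterion for bidirected confounding: let G be an FT-ADMG compatible with SCG G^s. If no variable Z that is an ancestor of Y in G^s satisfies Z ↔ Y in G^s, then in G no vertex Z_{t'} that is an ancestor of any vertex Y_t (of variable Y) is connected to any Y_s by a bidirected edge. -/
import Mathlib


structure MixedGraph (V : Type*) where
  dir : V → V → Prop
  bi : V → V → Prop

namespace MixedGraph

variable {V : Type*}

/-- Edge orientation along a path step: `fwd` = u → v, `back` = u ← v, `both` = u ↔ v. -/
inductive EdgeDir | fwd | back | both
deriving DecidableEq

/-- The step from `u` to `v` is realized by an edge of the given orientation. -/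
def stepOK (G : MixedGraph V) : EdgeDir → V → V → Prop
  | .fwd, u, v => G.dir u v
  | .back, u, v => G.dir v u
  | .both, u, v => G.bi u v

/-- The step has an arrowhead at its target end. -/
def headAtTarget : EdgeDir → Prop
  | .fwd => True
  | .back => False
  | .both => True

/-- The step has an arrowhead at its source end. -/
def headAtSource : EdgeDir → Prop
  | .fwd => False
  | .back => True
  | .both => True

/-- A path in a mixed graph: a sequence of distinct vertices joined by edges. -/
structure Path (G : MixedGraph V) (n : ℕ) where
  verts : Fin (n + 1) → V
  edges : Fin n → EdgeDir
  inj : Function.Injective verts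
  ok : ∀ i : Fin n, G.stepOK (edges i) (verts i.castSucc) (verts i.succ)

/-- The internal vertex at position `i` of the path is a collider: both adjacent
path edges have an arrowhead at it. -/
def Path.collider {G : MixedGraph V} {n : ℕ} (p : Path G n) (i : ℕ) : Prop :=
  ∃ (_h0 : 0 < i) (hn : i < n),
    headAtTarget (p.edges ⟨i - 1, by omega⟩) ∧ headAtSource (p.edges ⟨i, hn⟩)

/-- `v` is a descendant of `u` (via a directed path, reflexively). -/
def descendant (G : MixedGraph V) (u v : V) : Prop :=
  Relation.ReflTransGen G.dir u v

/-- A path is blocked by `S`: some internal non-collider is in `S`, or some collider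
has no descendant (including itself) in `S`. -/
def Path.blockedBy {G : MixedGraph V} {n : ℕ} (p : Path G n) (S : Set V) : Prop :=
  (∃ i, ∃ _h0 : 0 < i, ∃ _hn : i < n,
      ¬ p.collider i ∧ p.verts ⟨i, by omega⟩ ∈ S) ∨
  (∃ i, ∃ _hn : i < n,
      p.collider i ∧ ∀ d, descendant G (p.verts ⟨i, by omega⟩) d → d ∉ S)

/-- `A` is d-separated from `B` by `S` in `G`. -/
def dsep (G : MixedGraph V) (A B S : Set V) : Prop :=
  ∀ (n : ℕ) (p : Path G n), p.verts 0 ∈ A → p.verts (Fin.last n) ∈ B → p.blockedBy S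

/-- Directed parents of a vertex. -/
def parents (G : MixedGraph V) (y : V) : Set V := {w | G.dir w y}

/-- Mutilated graph `G_{\underline{P}}`: all directed edges out of `P` removed. -/
def mutUnder (G : MixedGraph V) (P : Set V) : MixedGraph V :=
  ⟨fun u v => G.dir u v ∧ u ∉ P, G.bi⟩

/-- Mutilated graph `G_{\overline{Z}}`: all directed edges into `Z` removed. -/
def mutOver (G : MixedGraph V) (Z : Set V) : MixedGraph V :=
  ⟨fun u v => G.dir u v ∧ v ∉ Z, G.bi⟩

end MixedGraph

/-- Directed edge of the summary causal graph of a full-time graph. -/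
def summaryDir {I : Type*} (G : MixedGraph (I × ℤ)) (a b : I) : Prop :=
  ∃ s t : ℤ, G.dir (a, s) (b, t)

/-- Bidirected edge of the summary causal graph of a full-time graph. -/
def summaryBi {I : Type*} (G : MixedGraph (I × ℤ)) (a b : I) : Prop :=
  ∃ s t : ℤ, G.bi (a, s) (b, t)

/-- Possible parents of `Y_t` given summary directed edges `S` and maximal lag `γmax`. -/
def PP {I : Type*} (S : I → I → Prop) (γmax : ℕ) (Y : I) (t : ℤ) : Set (I × ℤ) :=
  {v | (v.1 ≠ Y ∧ S v.1 Y ∧ ∃ γ : ℕ, γ ≤ γmax ∧ v.2 = t - γ) ∨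
       (v.1 = Y ∧ S Y Y ∧ ∃ γ : ℕ, 0 < γ ∧ γ ≤ γmax ∧ v.2 = t - γ)}

/-- if no ancestor `Z` of `Y` in the summary graph satisfies `Z ↔ Y`
in the summary graph, then in the full-time graph no ancestor `(Z,t')` of any
`(Y,t)` is connected to any `(Y,s)` by a bidirected edge. -/
theorem stmt13 {I : Type*} (G : MixedGraph (I × ℤ)) (Y : I)
    (h : ∀ Z : I, Relation.ReflTransGen (summaryDir G) Z Y → ¬ summaryBi G Z Y) :
    ∀ (Z : I) (t' t s : ℤ),
      Relation.ReflTransGen G.dir (Z, t') (Y, t) → ¬ G.bi (Z, t') (Y, s) := by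
  have proj : ∀ u v : I × ℤ, Relation.ReflTransGen G.dir u v →
      Relation.ReflTransGen (summaryDir G) u.1 v.1 := by
    intro u v huv
    induction huv with
    | refl => exact Relation.ReflTransGen.refl
    | tail _ hstep ih =>
      exact ih.tail ⟨_, _, hstep⟩
  intro Z t' t s hanc hbi
  exact h Z (proj _ _ hanc) ⟨t', s, hbi⟩
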